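/- Let n = 4 and let r_1, r_2, r_3, r_4 > 0. At any parade with signed coordinates x_i = ε_i r_i (ε_i ∈ {±1}, ε_4 = 1) such that x_i ≠ x_{i+1} for all i mod 4, the Hessian matrix of L with respect to (α_1, α_2, α_3) equals the tridiagonal matrix [[b_1 + b_2, −b_2, 0], [−b_2, b_2 + b_3, −b_3], [0, −b_3, b_3 + b_4]] with b_i = x_{i−1} x_i / |x_{i−1} − x_i| (indices mod 4), and its determinant equals H(x) = (x_1 x_2 x_3 x_4 / (|x_1 − x_2| |x_2 − x_3| |x_3 − x_4| |x_4 − x_1|)) · (x_1 x_2 |x_3 − x_4| + x_2 x_3 |x_4 − x_1| + x_3 x_4 |x_1 − x_2| + x_4 x_1 |x_2 − x_3|). -/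

import Mathlib

open Real

/-- Length of the chordal segment between points at radii `r`, `r'` whose polar angles
differ by `θ`. -/
noncomputable def ell (r r' θ : ℝ) : ℝ :=
  Real.sqrt (r ^ 2 + r' ^ 2 - 2 * r * r' * Real.cos θ)

/-- The perimeter of the connecting cycle for four concentric circles of radii
`r1, r2, r3, r4`, as a function of the polar angles `a1, a2, a3` of the first three
vertices, the fourth angle being fixed to `0`. -/
noncomputable def L4 (r1 r2 r3 r4 : ℝ) (a1 a2 a3 : ℝ) : ℝ :=
  ell r1 r2 (a2 - a1) + ell r2 r3 (a3 - a2) + ell r3 r4 (0 - a3) + ell r4 r1 (a1 - 0)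

/-- Partial derivative in the first of three variables. -/
noncomputable def pd1 (f : ℝ → ℝ → ℝ → ℝ) (a b c : ℝ) : ℝ := deriv (fun x => f x b c) a

/-- Partial derivative in the second of three variables. -/
noncomputable def pd2 (f : ℝ → ℝ → ℝ → ℝ) (a b c : ℝ) : ℝ := deriv (fun y => f a y c) b

/-- Partial derivative in the third of three variables. -/
noncomputable def pd3 (f : ℝ → ℝ → ℝ → ℝ) (a b c : ℝ) : ℝ := deriv (fun z => f a b z) c

/-- The Hessian matrix of `L4 r1 r2 r3 r4` at `(a, b, c)` in the reduced coordinates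
`(α₁, α₂, α₃)`. -/
noncomputable def hess4 (r1 r2 r3 r4 a b c : ℝ) : Matrix (Fin 3) (Fin 3) ℝ :=
  !![pd1 (pd1 (L4 r1 r2 r3 r4)) a b c, pd1 (pd2 (L4 r1 r2 r3 r4)) a b c,
       pd1 (pd3 (L4 r1 r2 r3 r4)) a b c;
     pd2 (pd1 (L4 r1 r2 r3 r4)) a b c, pd2 (pd2 (L4 r1 r2 r3 r4)) a b c,
       pd2 (pd3 (L4 r1 r2 r3 r4)) a b c;
     pd3 (pd1 (L4 r1 r2 r3 r4)) a b c, pd3 (pd2 (L4 r1 r2 r3 r4)) a b c,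
       pd3 (pd3 (L4 r1 r2 r3 r4)) a b c]

/-! At a parade all vertices lie on the horizontal axis, so every chord
`ℓ(θ) = √(r² + r'² - 2 r r' cos θ)` of the cycle is evaluated at an angle with `sin θ = 0`, where
it is nondegenerate (consecutive signed coordinates differ) and hence smooth, with
`ℓ' = r r' sin θ / ℓ` and `ℓ'' = r r' cos θ / ℓ = x x' / |x - x'|`. The perimeter is a sum of
chord lengths of consecutive angle differences, so its Hessian is the reduced Laplacian of the
4-cycle weighted by these second derivatives `bᵢ`; by the matrix-tree theorem its determinant is
the sum of the products of three of the four weights, which is `H(x)`. -/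

open Filter Topology

noncomputable def hessian3 (F : ℝ → ℝ → ℝ → ℝ) (a b c : ℝ) : Matrix (Fin 3) (Fin 3) ℝ :=
  !![pd1 (pd1 F) a b c, pd1 (pd2 F) a b c, pd1 (pd3 F) a b c;
     pd2 (pd1 F) a b c, pd2 (pd2 F) a b c, pd2 (pd3 F) a b c;
     pd3 (pd1 F) a b c, pd3 (pd2 F) a b c, pd3 (pd3 F) a b c]

def cycleSum (f g h k : ℝ → ℝ) (a b c : ℝ) : ℝ :=
  f (b - a) + g (c - b) + h (0 - c) + k (a - 0)

lemma ContDiffAt.eventually_differentiableAt {f : ℝ → ℝ} {t : ℝ} (hf : ContDiffAt ℝ 2 f t) :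
    ∀ᶠ s in 𝓝 t, DifferentiableAt ℝ f s :=
  (hf.eventually (by simp)).mono fun _ hs => hs.differentiableAt (by simp)

lemma ContDiffAt.hasDerivAt_deriv {f : ℝ → ℝ} {t : ℝ} (hf : ContDiffAt ℝ 2 f t) :
    HasDerivAt (deriv f) (deriv (deriv f) t) t :=
  ((hf.derivWithin (m := 1) (by norm_num)).differentiableAt one_ne_zero).hasDerivAt

lemma eventually_comp_const_sub {P : ℝ → Prop} {a b : ℝ} (h : ∀ᶠ s in 𝓝 (b - a), P s) :
    ∀ᶠ x in 𝓝 a, P (b - x) :=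
  ((continuous_const.sub continuous_id).tendsto a).eventually h

lemma eventually_comp_sub_const {P : ℝ → Prop} {a b : ℝ} (h : ∀ᶠ s in 𝓝 (a - b), P s) :
    ∀ᶠ x in 𝓝 a, P (x - b) :=
  ((continuous_id.sub continuous_const).tendsto a).eventually h

namespace cycleSum

variable {f g h k : ℝ → ℝ} {a b c : ℝ}

lemma pd1_eq :
    pd1 (cycleSum f g h k) a b c = deriv (fun x => f (b - x) + k (x - 0)) a := by
  have : (fun x => cycleSum f g h k x b c) =
      fun x => f (b - x) + k (x - 0) + (g (c - b) + h (0 - c)) := by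
    funext x; simp only [cycleSum]; ring
  rw [pd1, this, deriv_add_const]

lemma pd3_eq :
    pd3 (cycleSum f g h k) a b c = deriv (fun z => g (z - b) + h (0 - z)) c := by
  have : (fun z => cycleSum f g h k a b z) =
      fun z => f (b - a) + (g (z - b) + h (0 - z)) + k (a - 0) := by
    funext z; simp only [cycleSum]; ring
  rw [pd3, this, deriv_add_const, deriv_const_add]

lemma pd1_eq_of_differentiableAt (hf : DifferentiableAt ℝ f (b - a))
    (hk : DifferentiableAt ℝ k (a - 0)) :
    pd1 (cycleSum f g h k) a b c = -deriv f (b - a) + deriv k (a - 0) := by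
  rw [pd1_eq]
  exact ((hf.hasDerivAt.comp_const_sub b a).add (hk.hasDerivAt.comp_sub_const a 0)).deriv

lemma pd2_eq_of_differentiableAt (hf : DifferentiableAt ℝ f (b - a))
    (hg : DifferentiableAt ℝ g (c - b)) :
    pd2 (cycleSum f g h k) a b c = deriv f (b - a) + -deriv g (c - b) :=
  ((((hf.hasDerivAt.comp_sub_const b a).add (hg.hasDerivAt.comp_const_sub c b)).add_const
    (h (0 - c))).add_const (k (a - 0))).deriv

lemma pd3_eq_of_differentiableAt (hg : DifferentiableAt ℝ g (c - b))
    (hh : DifferentiableAt ℝ h (0 - c)) :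
    pd3 (cycleSum f g h k) a b c = deriv g (c - b) + -deriv h (0 - c) := by
  rw [pd3_eq]
  exact ((hg.hasDerivAt.comp_sub_const c b).add (hh.hasDerivAt.comp_const_sub 0 c)).deriv

lemma pd1_pd1 (hf : ContDiffAt ℝ 2 f (b - a)) (hk : ContDiffAt ℝ 2 k (a - 0)) :
    pd1 (pd1 (cycleSum f g h k)) a b c = deriv (deriv f) (b - a) + deriv (deriv k) (a - 0) := by
  have hev : (fun x => pd1 (cycleSum f g h k) x b c) =ᶠ[𝓝 a]
      fun x => -deriv f (b - x) + deriv k (x - 0) := by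
    filter_upwards [eventually_comp_const_sub hf.eventually_differentiableAt,
      eventually_comp_sub_const hk.eventually_differentiableAt] with x hfx hkx
    exact pd1_eq_of_differentiableAt hfx hkx
  rw [pd1, hev.deriv_eq, ← neg_neg (deriv (deriv f) (b - a))]
  exact ((hf.hasDerivAt_deriv.comp_const_sub b a).neg.add
    (hk.hasDerivAt_deriv.comp_sub_const a 0)).deriv

lemma pd2_pd1 (hf : ContDiffAt ℝ 2 f (b - a)) (hk : DifferentiableAt ℝ k (a - 0)) :
    pd2 (pd1 (cycleSum f g h k)) a b c = -deriv (deriv f) (b - a) := by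
  have hev : (fun y => pd1 (cycleSum f g h k) a y c) =ᶠ[𝓝 b]
      fun y => -deriv f (y - a) + deriv k (a - 0) := by
    filter_upwards [eventually_comp_sub_const hf.eventually_differentiableAt] with y hfy
    exact pd1_eq_of_differentiableAt hfy hk
  rw [pd2, hev.deriv_eq]
  exact ((hf.hasDerivAt_deriv.comp_sub_const b a).neg.add_const _).deriv

lemma pd3_pd1 : pd3 (pd1 (cycleSum f g h k)) a b c = 0 := by
  simp only [pd3, pd1_eq, deriv_const]

lemma pd1_pd2 (hf : ContDiffAt ℝ 2 f (b - a)) (hg : DifferentiableAt ℝ g (c - b)) :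
    pd1 (pd2 (cycleSum f g h k)) a b c = -deriv (deriv f) (b - a) := by
  have hev : (fun x => pd2 (cycleSum f g h k) x b c) =ᶠ[𝓝 a]
      fun x => deriv f (b - x) + -deriv g (c - b) := by
    filter_upwards [eventually_comp_const_sub hf.eventually_differentiableAt] with x hfx
    exact pd2_eq_of_differentiableAt hfx hg
  rw [pd1, hev.deriv_eq]
  exact ((hf.hasDerivAt_deriv.comp_const_sub b a).add_const _).deriv

lemma pd2_pd2 (hf : ContDiffAt ℝ 2 f (b - a)) (hg : ContDiffAt ℝ 2 g (c - b)) :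
    pd2 (pd2 (cycleSum f g h k)) a b c = deriv (deriv f) (b - a) + deriv (deriv g) (c - b) := by
  have hev : (fun y => pd2 (cycleSum f g h k) a y c) =ᶠ[𝓝 b]
      fun y => deriv f (y - a) + -deriv g (c - y) := by
    filter_upwards [eventually_comp_sub_const hf.eventually_differentiableAt,
      eventually_comp_const_sub hg.eventually_differentiableAt] with y hfy hgy
    exact pd2_eq_of_differentiableAt hfy hgy
  rw [pd2, hev.deriv_eq, ← neg_neg (deriv (deriv g) (c - b))]
  exact ((hf.hasDerivAt_deriv.comp_sub_const b a).add
    (hg.hasDerivAt_deriv.comp_const_sub c b).neg).deriv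

lemma pd3_pd2 (hf : DifferentiableAt ℝ f (b - a)) (hg : ContDiffAt ℝ 2 g (c - b)) :
    pd3 (pd2 (cycleSum f g h k)) a b c = -deriv (deriv g) (c - b) := by
  have hev : (fun z => pd2 (cycleSum f g h k) a b z) =ᶠ[𝓝 c]
      fun z => deriv f (b - a) + -deriv g (z - b) := by
    filter_upwards [eventually_comp_sub_const hg.eventually_differentiableAt] with z hgz
    exact pd2_eq_of_differentiableAt hf hgz
  rw [pd3, hev.deriv_eq]
  exact ((hg.hasDerivAt_deriv.comp_sub_const c b).neg.const_add _).deriv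

lemma pd1_pd3 : pd1 (pd3 (cycleSum f g h k)) a b c = 0 := by
  simp only [pd1, pd3_eq, deriv_const]

lemma pd2_pd3 (hg : ContDiffAt ℝ 2 g (c - b)) (hh : DifferentiableAt ℝ h (0 - c)) :
    pd2 (pd3 (cycleSum f g h k)) a b c = -deriv (deriv g) (c - b) := by
  have hev : (fun y => pd3 (cycleSum f g h k) a y c) =ᶠ[𝓝 b]
      fun y => deriv g (c - y) + -deriv h (0 - c) := by
    filter_upwards [eventually_comp_const_sub hg.eventually_differentiableAt] with y hgy
    exact pd3_eq_of_differentiableAt hgy hh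
  rw [pd2, hev.deriv_eq]
  exact ((hg.hasDerivAt_deriv.comp_const_sub c b).add_const _).deriv

lemma pd3_pd3 (hg : ContDiffAt ℝ 2 g (c - b)) (hh : ContDiffAt ℝ 2 h (0 - c)) :
    pd3 (pd3 (cycleSum f g h k)) a b c = deriv (deriv g) (c - b) + deriv (deriv h) (0 - c) := by
  have hev : (fun z => pd3 (cycleSum f g h k) a b z) =ᶠ[𝓝 c]
      fun z => deriv g (z - b) + -deriv h (0 - z) := by
    filter_upwards [eventually_comp_sub_const hg.eventually_differentiableAt,
      eventually_comp_const_sub hh.eventually_differentiableAt] with z hgz hhz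
    exact pd3_eq_of_differentiableAt hgz hhz
  rw [pd3, hev.deriv_eq, ← neg_neg (deriv (deriv h) (0 - c))]
  exact ((hg.hasDerivAt_deriv.comp_sub_const c b).add
    (hh.hasDerivAt_deriv.comp_const_sub 0 c).neg).deriv

theorem hessian3_eq (hf : ContDiffAt ℝ 2 f (b - a)) (hg : ContDiffAt ℝ 2 g (c - b))
    (hh : ContDiffAt ℝ 2 h (0 - c)) (hk : ContDiffAt ℝ 2 k (a - 0)) :
    hessian3 (cycleSum f g h k) a b c =
      !![deriv (deriv k) (a - 0) + deriv (deriv f) (b - a), -deriv (deriv f) (b - a), 0;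
         -deriv (deriv f) (b - a), deriv (deriv f) (b - a) + deriv (deriv g) (c - b),
           -deriv (deriv g) (c - b);
         0, -deriv (deriv g) (c - b), deriv (deriv g) (c - b) + deriv (deriv h) (0 - c)] := by
  have hf1 := hf.differentiableAt two_ne_zero
  have hg1 := hg.differentiableAt two_ne_zero
  have hh1 := hh.differentiableAt two_ne_zero
  have hk1 := hk.differentiableAt two_ne_zero
  rw [hessian3, pd1_pd1 hf hk, pd1_pd2 hf hg1, pd1_pd3, pd2_pd1 hf hk1, pd2_pd2 hf hg,
    pd2_pd3 hg hh1, pd3_pd1, pd3_pd2 hf1 hg, pd3_pd3 hg hh, add_comm (deriv (deriv f) _)]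

end cycleSum

section ell

variable {r r' θ : ℝ}

lemma ell_ne_zero (hQ : r ^ 2 + r' ^ 2 - 2 * r * r' * cos θ ≠ 0) : ell r r' θ ≠ 0 := by
  have hQ₀ : 0 ≤ r ^ 2 + r' ^ 2 - 2 * r * r' * cos θ := by
    nlinarith [sq_nonneg (r - r' * cos θ), sq_nonneg (r' * sin θ), sin_sq_add_cos_sq θ]
  exact (sqrt_pos.2 (hQ₀.lt_of_ne' hQ)).ne'

lemma hasDerivAt_ell (hQ : r ^ 2 + r' ^ 2 - 2 * r * r' * cos θ ≠ 0) :
    HasDerivAt (ell r r') (r * r' * sin θ / ell r r' θ) θ := by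
  have hQ' : HasDerivAt (fun t => r ^ 2 + r' ^ 2 - 2 * r * r' * cos t)
      (2 * r * r' * sin θ) θ := by
    simpa using ((hasDerivAt_cos θ).const_mul (2 * r * r')).const_sub (r ^ 2 + r' ^ 2)
  refine ((hasDerivAt_sqrt hQ).comp θ hQ').congr_deriv ?_
  rw [ell]
  field_simp

lemma contDiffAt_ell (hQ : r ^ 2 + r' ^ 2 - 2 * r * r' * cos θ ≠ 0) :
    ContDiffAt ℝ 2 (ell r r') θ :=
  (show ContDiffAt ℝ 2 (fun t => r ^ 2 + r' ^ 2 - 2 * r * r' * cos t) θ by fun_prop).sqrt hQ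

lemma deriv_deriv_ell (hQ : r ^ 2 + r' ^ 2 - 2 * r * r' * cos θ ≠ 0) (hs : sin θ = 0) :
    deriv (deriv (ell r r')) θ = r * r' * cos θ / ell r r' θ := by
  have hev : deriv (ell r r') =ᶠ[𝓝 θ] fun t => r * r' * sin t / ell r r' t := by
    have hcont : Continuous fun t => r ^ 2 + r' ^ 2 - 2 * r * r' * cos t := by fun_prop
    filter_upwards [hcont.continuousAt.eventually_ne hQ] with t ht
    exact (hasDerivAt_ell ht).deriv
  have hell := ell_ne_zero hQ
  rw [hev.deriv_eq]
  refine (((hasDerivAt_sin θ).const_mul (r * r')).div (hasDerivAt_ell hQ) hell).deriv.trans ?_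
  rw [hs]
  field_simp
  ring

end ell

section parade

variable {r r' s t : ℝ}

lemma sq_add_sq_sub_mul_cos_sub (hs : sin s = 0) (ht : sin t = 0) :
    r ^ 2 + r' ^ 2 - 2 * r * r' * cos (s - t) = (r * cos t - r' * cos s) ^ 2 := by
  have hs' := sin_sq_add_cos_sq s
  have ht' := sin_sq_add_cos_sq t
  rw [cos_sub, hs, ht] at *
  linear_combination (-r' ^ 2) * hs' - r ^ 2 * ht'

lemma ell_sub_eq_abs (hs : sin s = 0) (ht : sin t = 0) :
    ell r r' (s - t) = |r * cos t - r' * cos s| := by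
  rw [ell, sq_add_sq_sub_mul_cos_sub hs ht, sqrt_sq_eq_abs]

lemma sq_add_sq_sub_mul_cos_sub_ne_zero (hs : sin s = 0) (ht : sin t = 0)
    (hx : r * cos t ≠ r' * cos s) : r ^ 2 + r' ^ 2 - 2 * r * r' * cos (s - t) ≠ 0 := by
  rw [sq_add_sq_sub_mul_cos_sub hs ht]
  exact pow_ne_zero 2 (sub_ne_zero.2 hx)

lemma contDiffAt_ell_sub (hs : sin s = 0) (ht : sin t = 0) (hx : r * cos t ≠ r' * cos s) :
    ContDiffAt ℝ 2 (ell r r') (s - t) :=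
  contDiffAt_ell (sq_add_sq_sub_mul_cos_sub_ne_zero hs ht hx)

lemma deriv_deriv_ell_sub (hs : sin s = 0) (ht : sin t = 0) (hx : r * cos t ≠ r' * cos s) :
    deriv (deriv (ell r r')) (s - t) = r * cos t * (r' * cos s) / |r * cos t - r' * cos s| := by
  have hst : sin (s - t) = 0 := by rw [sin_sub, hs, ht]; ring
  rw [deriv_deriv_ell (sq_add_sq_sub_mul_cos_sub_ne_zero hs ht hx) hst, ell_sub_eq_abs hs ht,
    cos_sub, hs, ht]
  ring

end parade

-- Kirchhoff: the sum runs over the spanning trees of the 4-cycle with edge weights `bᵢ`.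
lemma det_fin_three_tridiagonal (b1 b2 b3 b4 : ℝ) :
    !![b1 + b2, -b2, 0; -b2, b2 + b3, -b3; 0, -b3, b3 + b4].det =
      b2 * b3 * b4 + b1 * b3 * b4 + b1 * b2 * b4 + b1 * b2 * b3 := by
  simp only [Matrix.det_fin_three, Matrix.of_apply, Matrix.cons_val', Matrix.cons_val_zero,
    Matrix.cons_val_fin_one, Matrix.cons_val_one, Matrix.cons_val]
  ring

theorem stmt_16_general (r1 r2 r3 r4 : ℝ)
    (a1 a2 a3 : ℝ) (hp1 : a1 = 0 ∨ a1 = π) (hp2 : a2 = 0 ∨ a2 = π) (hp3 : a3 = 0 ∨ a3 = π)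
    (hx12 : r1 * Real.cos a1 ≠ r2 * Real.cos a2)
    (hx23 : r2 * Real.cos a2 ≠ r3 * Real.cos a3)
    (hx34 : r3 * Real.cos a3 ≠ r4)
    (hx41 : r4 ≠ r1 * Real.cos a1) :
    (hess4 r1 r2 r3 r4 a1 a2 a3 =
      let x1 := r1 * Real.cos a1
      let x2 := r2 * Real.cos a2
      let x3 := r3 * Real.cos a3
      let x4 := r4
      let b1 := x4 * x1 / |x4 - x1|
      let b2 := x1 * x2 / |x1 - x2|
      let b3 := x2 * x3 / |x2 - x3|
      let b4 := x3 * x4 / |x3 - x4|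
      !![b1 + b2, -b2, 0; -b2, b2 + b3, -b3; 0, -b3, b3 + b4]) ∧
    ((hess4 r1 r2 r3 r4 a1 a2 a3).det =
      let x1 := r1 * Real.cos a1
      let x2 := r2 * Real.cos a2
      let x3 := r3 * Real.cos a3
      let x4 := r4
      x1 * x2 * x3 * x4 / (|x1 - x2| * |x2 - x3| * |x3 - x4| * |x4 - x1|) *
        (x1 * x2 * |x3 - x4| + x2 * x3 * |x4 - x1| + x3 * x4 * |x1 - x2| +
          x4 * x1 * |x2 - x3|)) := by
  have sin_of_parade : ∀ {α : ℝ}, α = 0 ∨ α = π → sin α = 0 := by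
    rintro α (rfl | rfl) <;> simp
  have hs1 := sin_of_parade hp1
  have hs2 := sin_of_parade hp2
  have hs3 := sin_of_parade hp3
  have hx34' : r3 * cos a3 ≠ r4 * cos 0 := by rwa [cos_zero, mul_one]
  have hx41' : r4 * cos 0 ≠ r1 * cos a1 := by rwa [cos_zero, mul_one]
  -- `hess4 r1 r2 r3 r4` is `hessian3 (cycleSum (ell r1 r2) (ell r2 r3) (ell r3 r4) (ell r4 r1))`.
  have hH : hess4 r1 r2 r3 r4 a1 a2 a3 = _ := cycleSum.hessian3_eq
    (contDiffAt_ell_sub hs2 hs1 hx12) (contDiffAt_ell_sub hs3 hs2 hx23)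
    (contDiffAt_ell_sub sin_zero hs3 hx34') (contDiffAt_ell_sub hs1 sin_zero hx41')
  rw [deriv_deriv_ell_sub hs2 hs1 hx12, deriv_deriv_ell_sub hs3 hs2 hx23,
    deriv_deriv_ell_sub sin_zero hs3 hx34', deriv_deriv_ell_sub hs1 sin_zero hx41', cos_zero,
    mul_one] at hH
  refine ⟨hH, ?_⟩
  have h12 := abs_pos.2 (sub_ne_zero.2 hx12)
  have h23 := abs_pos.2 (sub_ne_zero.2 hx23)
  have h34 := abs_pos.2 (sub_ne_zero.2 hx34)
  have h41 := abs_pos.2 (sub_ne_zero.2 hx41)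
  rw [hH, det_fin_three_tridiagonal]
  field_simp
  ring

/-- at any parade for four concentric circles (angles in `{0, π}`, fourth
vertex fixed at `(r4, 0)`) with distinct consecutive signed coordinates `xᵢ = rᵢ cos αᵢ`
(`x₄ = r₄`), the Hessian of the perimeter in `(α₁, α₂, α₃)` equals the tridiagonal matrix
`[[b₁+b₂, −b₂, 0], [−b₂, b₂+b₃, −b₃], [0, −b₃, b₃+b₄]]` with
`bᵢ = x_{i−1} xᵢ / |x_{i−1} − xᵢ|` (indices mod 4), and its determinant equals
`(x₁x₂x₃x₄ / (|x₁−x₂||x₂−x₃||x₃−x₄||x₄−x₁|)) ·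
(x₁x₂|x₃−x₄| + x₂x₃|x₄−x₁| + x₃x₄|x₁−x₂| + x₄x₁|x₂−x₃|)`. -/
theorem stmt_16 (r1 r2 r3 r4 : ℝ) (h1 : 0 < r1) (h2 : 0 < r2) (h3 : 0 < r3) (h4 : 0 < r4)
    (a1 a2 a3 : ℝ) (hp1 : a1 = 0 ∨ a1 = π) (hp2 : a2 = 0 ∨ a2 = π) (hp3 : a3 = 0 ∨ a3 = π)
    (hx12 : r1 * Real.cos a1 ≠ r2 * Real.cos a2)
    (hx23 : r2 * Real.cos a2 ≠ r3 * Real.cos a3)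
    (hx34 : r3 * Real.cos a3 ≠ r4)
    (hx41 : r4 ≠ r1 * Real.cos a1) :
    (hess4 r1 r2 r3 r4 a1 a2 a3 =
      let x1 := r1 * Real.cos a1
      let x2 := r2 * Real.cos a2
      let x3 := r3 * Real.cos a3
      let x4 := r4
      let b1 := x4 * x1 / |x4 - x1|
      let b2 := x1 * x2 / |x1 - x2|
      let b3 := x2 * x3 / |x2 - x3|
      let b4 := x3 * x4 / |x3 - x4|
      !![b1 + b2, -b2, 0; -b2, b2 + b3, -b3; 0, -b3, b3 + b4]) ∧
    ((hess4 r1 r2 r3 r4 a1 a2 a3).det =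
      let x1 := r1 * Real.cos a1
      let x2 := r2 * Real.cos a2
      let x3 := r3 * Real.cos a3
      let x4 := r4
      x1 * x2 * x3 * x4 / (|x1 - x2| * |x2 - x3| * |x3 - x4| * |x4 - x1|) *
        (x1 * x2 * |x3 - x4| + x2 * x3 * |x4 - x1| + x3 * x4 * |x1 - x2| +
          x4 * x1 * |x2 - x3|)) :=
  stmt_16_general r1 r2 r3 r4 a1 a2 a3 hp1 hp2 hp3 hx12 hx23 hx34 hx41
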